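/- arXiv:math/0609812 — 3 statements merged into one kernel-verified Lean document; each statement's English description precedes it below -/
import Mathlib

section
/- The function X ↦ ∑_{i,j} |X_{ij}| is the largest convex function on the hypercube {X : |X_{ij}| ≤ 1 for all i,j} that is bounded above by the cardinality function Card(X) (the number of nonzero entries of X); equivalently, for any convex function g on the hypercube with g ≤ Card pointwise, g(X) ≤ ∑_{i,j}|X_{ij}| for all X in the hypercube. -/
open Finset

section Aux

variable {n : ℕ}

private lemma key_sum (a : Fin n × Fin n → ℝ) (p : Fin n × Fin n)
    (ha : ∀ q, a q + (1 - a q) = 1) :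
    ∑ S ∈ (univ : Finset (Fin n × Fin n)).powerset,
      (if p ∈ S then (∏ q ∈ S, a q) * ∏ q ∈ univ \ S, (1 - a q) else 0) = a p := by
  classical
  have h := Finset.prod_add a (fun q => if q = p then 0 else 1 - a q)
      (univ : Finset (Fin n × Fin n))
  have hleft : ∏ q ∈ (univ : Finset (Fin n × Fin n)),
      (a q + if q = p then 0 else 1 - a q) = a p := by
    have hone : ∀ q ∈ univ \ {p}, (a q + if q = p then 0 else 1 - a q) = (1:ℝ) := by
      intro q hq
      have hqp : q ≠ p := by simpa using (Finset.mem_sdiff.mp hq).2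
      simp [hqp, ha q]
    rw [Finset.prod_eq_mul_prod_sdiff_singleton_of_mem (Finset.mem_univ p)]
    simp only [if_pos rfl, add_zero]
    rw [Finset.prod_congr rfl hone, Finset.prod_const_one, mul_one]
    simp
  rw [hleft] at h
  rw [h]
  apply Finset.sum_congr rfl
  intro S hS
  by_cases hp : p ∈ S
  · rw [if_pos hp]
    congr 1
    apply Finset.prod_congr rfl
    intro q hq
    have : q ≠ p := fun h => (Finset.mem_sdiff.mp hq).2 (h ▸ hp)
    simp [this]
  · rw [if_neg hp]
    have hpd : p ∈ univ \ S := Finset.mem_sdiff.mpr ⟨Finset.mem_univ p, hp⟩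
    rw [Finset.prod_eq_zero hpd (by simp), mul_zero]

end Aux

/-- The entrywise ℓ1 norm `∑ i j, |X i j|` is the convex envelope of the
cardinality function (number of nonzero entries) on the hypercube
`{X : |X i j| ≤ 1}` of n×n real matrices. -/
theorem l1_is_convex_envelope_of_card (n : ℕ) :
    let H : Set (Matrix (Fin n) (Fin n) ℝ) := {X | ∀ i j, |X i j| ≤ 1}
    let card : Matrix (Fin n) (Fin n) ℝ → ℝ :=
      fun X => ((Finset.univ.filter (fun p : Fin n × Fin n => X p.1 p.2 ≠ 0)).card : ℝ)
    let l1 : Matrix (Fin n) (Fin n) ℝ → ℝ := fun X => ∑ i, ∑ j, |X i j|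
    ConvexOn ℝ H l1 ∧
    (∀ X ∈ H, l1 X ≤ card X) ∧
    (∀ g : Matrix (Fin n) (Fin n) ℝ → ℝ, ConvexOn ℝ H g →
      (∀ X ∈ H, g X ≤ card X) → ∀ X ∈ H, g X ≤ l1 X) := by
  classical
  intro H card l1
  have hHconv : Convex ℝ H := by
    intro X hX Y hY a b ha hb hab i j
    have h1 : (a • X + b • Y) i j = a * X i j + b * Y i j := by
      simp [Matrix.add_apply, Matrix.smul_apply, smul_eq_mul]
    rw [h1]
    calc |a * X i j + b * Y i j| ≤ |a * X i j| + |b * Y i j| := abs_add_le _ _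
      _ = a * |X i j| + b * |Y i j| := by
          rw [abs_mul, abs_mul, abs_of_nonneg ha, abs_of_nonneg hb]
      _ ≤ a * 1 + b * 1 := by
          gcongr
          · exact hX i j
          · exact hY i j
      _ = 1 := by linarith
  refine ⟨⟨hHconv, ?_⟩, ?_, ?_⟩
  · -- convexity of l1
    intro X hX Y hY a b ha hb hab
    simp only [l1, smul_eq_mul]
    rw [Finset.mul_sum, Finset.mul_sum, ← Finset.sum_add_distrib]
    apply Finset.sum_le_sum
    intro i _
    rw [Finset.mul_sum, Finset.mul_sum, ← Finset.sum_add_distrib]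
    apply Finset.sum_le_sum
    intro j _
    have h1 : (a • X + b • Y) i j = a * X i j + b * Y i j := by
      simp [Matrix.add_apply, Matrix.smul_apply, smul_eq_mul]
    rw [h1]
    calc |a * X i j + b * Y i j| ≤ |a * X i j| + |b * Y i j| := abs_add_le _ _
      _ = a * |X i j| + b * |Y i j| := by
          rw [abs_mul, abs_mul, abs_of_nonneg ha, abs_of_nonneg hb]
  · -- l1 ≤ card
    intro X hX
    have h1 : l1 X = ∑ p : Fin n × Fin n, |X p.1 p.2| := by
      rw [← Finset.univ_product_univ, Finset.sum_product]
    rw [h1]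
    have h2 : card X = ∑ p : Fin n × Fin n, (if X p.1 p.2 ≠ 0 then (1:ℝ) else 0) := by
      simp [card, Finset.sum_ite, Finset.sum_const]
    rw [h2]
    apply Finset.sum_le_sum
    intro p _
    by_cases hp : X p.1 p.2 = 0
    · simp [hp]
    · simp only [hp, ne_eq, not_false_eq_true, if_true]
      exact hX p.1 p.2
  · -- envelope property
    intro g hg hgc X hX
    set a : Fin n × Fin n → ℝ := fun p => |X p.1 p.2| with ha_def
    have ha0 : ∀ p, 0 ≤ a p := fun p => abs_nonneg _
    have ha1 : ∀ p, a p ≤ 1 := fun p => hX p.1 p.2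
    set w : Finset (Fin n × Fin n) → ℝ :=
      fun S => (∏ q ∈ S, a q) * ∏ q ∈ univ \ S, (1 - a q) with hw_def
    have hw0 : ∀ S ∈ (univ : Finset (Fin n × Fin n)).powerset, 0 ≤ w S := by
      intro S _
      apply mul_nonneg
      · exact Finset.prod_nonneg fun q _ => ha0 q
      · exact Finset.prod_nonneg fun q _ => by linarith [ha1 q]
    have hw1 : ∑ S ∈ (univ : Finset (Fin n × Fin n)).powerset, w S = 1 := by
      rw [hw_def, ← Finset.prod_add a (fun q => 1 - a q) univ]
      simp
    set Y : Finset (Fin n × Fin n) → Matrix (Fin n) (Fin n) ℝ :=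
      fun S => Matrix.of fun i j => if (i, j) ∈ S then (SignType.sign (X i j) : ℝ) else 0
      with hY_def
    have hYH : ∀ S, Y S ∈ H := by
      intro S i j
      simp only [hY_def, Matrix.of_apply]
      split
      · rcases lt_trichotomy (X i j) 0 with h | h | h <;> simp [h]
      · simp
    have hkey : ∀ p : Fin n × Fin n,
        ∑ S ∈ (univ : Finset (Fin n × Fin n)).powerset,
          (if p ∈ S then w S else 0) = a p :=
      fun p => key_sum a p (fun q => by ring)
    have hcomb : ∑ S ∈ (univ : Finset (Fin n × Fin n)).powerset, w S • Y S = X := by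
      ext i j
      have h1 : (∑ S ∈ (univ : Finset (Fin n × Fin n)).powerset, w S • Y S) i j
          = ∑ S ∈ (univ : Finset (Fin n × Fin n)).powerset, w S * (Y S i j) := by
        simp [Matrix.sum_apply, Matrix.smul_apply, smul_eq_mul]
      rw [h1]
      have h2 : ∀ S ∈ (univ : Finset (Fin n × Fin n)).powerset,
          w S * Y S i j = (SignType.sign (X i j) : ℝ) * (if (i,j) ∈ S then w S else 0) := by
        intro S _
        simp only [hY_def, Matrix.of_apply]
        split <;> ring
      rw [Finset.sum_congr rfl h2, ← Finset.mul_sum, hkey (i, j)]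
      simpa [ha_def] using sign_mul_abs (X i j)
    have hJensen := hg.map_sum_le hw0 hw1 (fun S _ => hYH S)
    rw [hcomb] at hJensen
    have hstep2 : ∀ S ∈ (univ : Finset (Fin n × Fin n)).powerset,
        w S • g (Y S) ≤ w S * S.card := by
      intro S hS
      have hcard : card (Y S) ≤ (S.card : ℝ) := by
        have hsub : (univ.filter (fun p : Fin n × Fin n => Y S p.1 p.2 ≠ 0)) ⊆ S := by
          intro p hp
          simp only [Finset.mem_filter, hY_def, Matrix.of_apply] at hp
          by_contra hpS
          exact hp.2 (by simp [hpS])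
        exact_mod_cast Nat.cast_le.mpr (Finset.card_le_card hsub)
      calc w S • g (Y S) ≤ w S * card (Y S) := by
            rw [smul_eq_mul]
            exact mul_le_mul_of_nonneg_left (hgc (Y S) (hYH S)) (hw0 S hS)
        _ ≤ w S * S.card := mul_le_mul_of_nonneg_left hcard (hw0 S hS)
    have hl1 : ∑ S ∈ (univ : Finset (Fin n × Fin n)).powerset, w S * S.card = l1 X := by
      have hc : ∀ S ∈ (univ : Finset (Fin n × Fin n)).powerset,
          w S * S.card = ∑ p : Fin n × Fin n, (if p ∈ S then w S else 0) := by
        intro S hS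
        rw [Finset.sum_ite_mem, Finset.univ_inter, Finset.sum_const, nsmul_eq_mul, mul_comm]
      rw [Finset.sum_congr rfl hc, Finset.sum_comm]
      rw [Finset.sum_congr rfl (fun p _ => hkey p)]
      simp only [l1, ha_def]
      rw [← Finset.univ_product_univ, Finset.sum_product]
    calc g X ≤ ∑ S ∈ (univ : Finset (Fin n × Fin n)).powerset, w S • g (Y S) := hJensen
      _ ≤ ∑ S ∈ (univ : Finset (Fin n × Fin n)).powerset, w S * S.card :=
          Finset.sum_le_sum hstep2
      _ = l1 X := hl1
end

section
/- For positive definite matrices A and X of the same size, log det X ≤ −log det A − n + Tr(AX), with equality iff X = A⁻¹. -/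
/-!
Conjugating by `√A` turns the claim into a statement about the single positive definite matrix
`M = √A X √A`, for which `det M = det A · det X` and `tr M = tr (A X)`. Diagonalising `M`, the
inequality `log det M ≤ tr M - n` is the sum over its eigenvalues `μᵢ > 0` of `log μ ≤ μ - 1`,
which is strict unless `μ = 1`; so equality forces all `μᵢ = 1`, i.e. `M = 1`, i.e. `X = A⁻¹`.
-/

open Finset Matrix
open scoped MatrixOrder ComplexOrder

namespace Real

theorem sum_log_le_sum_sub_one {ι : Type*} (s : Finset ι) {x : ι → ℝ}
    (hx : ∀ i ∈ s, 0 < x i) : ∑ i ∈ s, log (x i) ≤ ∑ i ∈ s, (x i - 1) :=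
  sum_le_sum fun i hi ↦ log_le_sub_one_of_pos (hx i hi)

theorem sum_log_eq_sum_sub_one_iff {ι : Type*} (s : Finset ι) {x : ι → ℝ}
    (hx : ∀ i ∈ s, 0 < x i) :
    ∑ i ∈ s, log (x i) = ∑ i ∈ s, (x i - 1) ↔ ∀ i ∈ s, x i = 1 := by
  rw [sum_eq_sum_iff_of_le fun i hi ↦ log_le_sub_one_of_pos (hx i hi)]
  refine forall₂_congr fun i hi ↦ ⟨fun h ↦ ?_, fun h ↦ by simp [h]⟩
  by_contra hne
  exact (log_lt_sub_one_of_pos (hx i hi) hne).ne h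

end Real

namespace CFC

variable {A : Type*} [PartialOrder A] [Ring A] [StarRing A] [TopologicalSpace A]
  [StarOrderedRing A] [Algebra ℝ A] [ContinuousFunctionalCalculus ℝ A IsSelfAdjoint]
  [NonnegSpectrumClass ℝ A] [IsSemitopologicalRing A] [T2Space A]

theorem conjSqrt_eq_one_iff {c a : A} (hc : IsStrictlyPositive c) :
    conjSqrt c a = 1 ↔ a = Ring.inverse c := by
  constructor
  · intro h
    rw [← conjSqrt_ringInverse_conjSqrt c a, h, conjSqrt_one _ hc.ringInverse.nonneg]
  · rintro rfl
    rw [← conjSqrt_one _ hc.ringInverse.nonneg, conjSqrt_conjSqrt_ringInverse c 1]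

end CFC

namespace Matrix

variable {𝕜 ι : Type*} [RCLike 𝕜] [Fintype ι] [DecidableEq ι]

theorem IsHermitian.eigenvalues_eq_one_iff {A : Matrix ι ι 𝕜} (hA : A.IsHermitian) :
    hA.eigenvalues = 1 ↔ A = 1 := by
  constructor
  · intro h
    refine CFC.eq_one_of_spectrum_subset_one (R := ℝ) A ?_ hA
    simp [hA.spectrum_real_eq_range_eigenvalues, h]
  · rintro rfl
    ext i
    have : Nonempty ι := ⟨i⟩
    simpa [spectrum.one_eq] using hA.eigenvalues_mem_spectrum_real i

theorem trace_conjSqrt {A : Matrix ι ι 𝕜} (hA : 0 ≤ A) (X : Matrix ι ι 𝕜) :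
    (CFC.conjSqrt A X).trace = (A * X).trace := by
  rw [CFC.conjSqrt_apply, trace_mul_comm, ← Matrix.mul_assoc, CFC.sqrt_mul_sqrt_self A hA]

theorem det_conjSqrt {A : Matrix ι ι 𝕜} (hA : 0 ≤ A) (X : Matrix ι ι 𝕜) :
    (CFC.conjSqrt A X).det = A.det * X.det := by
  rw [CFC.conjSqrt_apply, det_mul, det_mul, mul_right_comm, ← det_mul,
    CFC.sqrt_mul_sqrt_self A hA]

theorem PosDef.conjSqrt {A X : Matrix ι ι 𝕜} (hA : A.PosDef) (hX : X.PosDef) :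
    (CFC.conjSqrt A X).PosDef :=
  ((CFC.isStrictlyPositive_conjSqrt_iff A X hA.isStrictlyPositive).2 hX.isStrictlyPositive).posDef

namespace PosDef

variable {M : Matrix ι ι ℝ}

theorem log_det_eq_sum_log_eigenvalues (hM : M.PosDef) :
    Real.log M.det = ∑ i, Real.log (hM.isHermitian.eigenvalues i) := by
  rw [hM.isHermitian.det_eq_prod_eigenvalues]
  exact Real.log_prod fun i _ ↦ (hM.eigenvalues_pos i).ne'

theorem trace_sub_card_eq_sum_eigenvalues_sub_one (hM : M.PosDef) :
    M.trace - Fintype.card ι = ∑ i, (hM.isHermitian.eigenvalues i - 1) := by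
  simp [hM.isHermitian.trace_eq_sum_eigenvalues]

theorem log_det_le_trace_sub_card (hM : M.PosDef) :
    Real.log M.det ≤ M.trace - Fintype.card ι := by
  rw [hM.log_det_eq_sum_log_eigenvalues, hM.trace_sub_card_eq_sum_eigenvalues_sub_one]
  exact Real.sum_log_le_sum_sub_one _ fun i _ ↦ hM.eigenvalues_pos i

theorem log_det_eq_trace_sub_card_iff (hM : M.PosDef) :
    Real.log M.det = M.trace - Fintype.card ι ↔ M = 1 := by
  rw [hM.log_det_eq_sum_log_eigenvalues, hM.trace_sub_card_eq_sum_eigenvalues_sub_one,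
    Real.sum_log_eq_sum_sub_one_iff _ fun i _ ↦ hM.eigenvalues_pos i,
    ← hM.isHermitian.eigenvalues_eq_one_iff, funext_iff]
  simp

end PosDef

end Matrix

/-- For positive definite matrices `A` and `X`,
`log det X ≤ −log det A − n + Tr(AX)`, with equality iff `X = A⁻¹`. -/
theorem log_det_gradient_inequality (n : ℕ)
    (A X : Matrix (Fin n) (Fin n) ℝ) (hA : A.PosDef) (hX : X.PosDef) :
    Real.log X.det ≤ -Real.log A.det - n + (A * X).trace ∧
    (Real.log X.det = -Real.log A.det - n + (A * X).trace ↔ X = A⁻¹) := by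
  have hM := hA.conjSqrt hX
  have hlog : Real.log (CFC.conjSqrt A X).det = Real.log A.det + Real.log X.det := by
    rw [det_conjSqrt hA.posSemidef.nonneg, Real.log_mul hA.det_pos.ne' hX.det_pos.ne']
  have htr := trace_conjSqrt hA.posSemidef.nonneg X
  have hle := hM.log_det_le_trace_sub_card
  have heq := hM.log_det_eq_trace_sub_card_iff
  rw [hlog, htr, Fintype.card_fin] at hle heq
  rw [CFC.conjSqrt_eq_one_iff hA.isStrictlyPositive, ← nonsing_inv_eq_ringInverse] at heq
  refine ⟨by linarith, ?_⟩
  rw [← heq]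
  constructor <;> intro h <;> linarith
end

section
/- Given a symmetric matrix S with eigenvalues σᵢ all positive and eigendecomposition S = Vᵀ diag(σ) V, the minimizer of Tr(SX) − log det X over {X symmetric : αI ⪯ X ⪯ βI} is X* = Vᵀ diag(λ) V with λᵢ = min(max(1/σᵢ, α), β). -/
/-!
Conjugating by `V` turns the objective into `∑ σᵢ Yᵢᵢ - log det Y` with `Y = V X Vᵀ`, and `Y`
satisfies the same bounds `αI ⪯ Y ⪯ βI`. Hadamard's inequality `det Y ≤ ∏ Yᵢᵢ` bounds this from
below by the separable function `∑ (σᵢ Yᵢᵢ - log Yᵢᵢ)` with `Yᵢᵢ ∈ [α, β]`. Each summand is convex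
in `Yᵢᵢ`, so on `[α, β]` it is minimal at the clipped stationary point `λᵢ = min (max σᵢ⁻¹ α) β`;
at `X*` we have `Y = diag λ`, where both bounds are equalities.
-/

open Matrix

theorem mul_sub_log_min_max_inv_le {s a b t : ℝ} (hs : 0 < s) (ha : 0 < a) (hab : a ≤ b)
    (ht : t ∈ Set.Icc a b) :
    s * min (max s⁻¹ a) b - Real.log (min (max s⁻¹ a) b) ≤ s * t - Real.log t := by
  set l := min (max s⁻¹ a) b
  have hl : 0 < l := lt_min (lt_max_of_lt_right ha) (ha.trans_le hab)
  have first_order : 0 ≤ (s - l⁻¹) * (t - l) := by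
    rcases le_total s⁻¹ a with hsa | hsa
    · have hla : l = a := by simp [l, hsa, hab]
      rw [hla]
      exact mul_nonneg (sub_nonneg.2 ((inv_le_comm₀ hs ha).1 hsa)) (sub_nonneg.2 ht.1)
    rcases le_total b s⁻¹ with hbs | hbs
    · have hlb : l = b := by simp [l, hsa, hbs]
      rw [hlb]
      exact mul_nonneg_of_nonpos_of_nonpos
        (sub_nonpos.2 ((le_inv_comm₀ (ha.trans_le hab) hs).1 hbs)) (sub_nonpos.2 ht.2)
    · have hls : l = s⁻¹ := by simp [l, hsa, hbs]
      simp [hls]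
  have tangent : Real.log t - Real.log l ≤ t / l - 1 := by
    rw [← Real.log_div (ha.trans_le ht.1).ne' hl.ne']
    exact Real.log_le_sub_one_of_pos (div_pos (ha.trans_le ht.1) hl)
  have expand : (s - l⁻¹) * (t - l) = s * t - s * l - (t / l - 1) := by
    field_simp
  linarith

namespace Matrix

variable {ι : Type*} [DecidableEq ι]

def loewnerIcc (α β : ℝ) : Set (Matrix ι ι ℝ) :=
  {X | X.IsHermitian ∧ (X - α • 1).PosSemidef ∧ (β • 1 - X).PosSemidef}

variable {α β : ℝ} {X : Matrix ι ι ℝ}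

theorem diagonal_mem_loewnerIcc {d : ι → ℝ} (hd : ∀ i, d i ∈ Set.Icc α β) :
    diagonal d ∈ loewnerIcc α β := by
  refine ⟨isHermitian_diagonal d, ?_, ?_⟩
  · rw [smul_one_eq_diagonal, diagonal_sub, posSemidef_diagonal_iff]
    exact fun i => sub_nonneg.2 (hd i).1
  · rw [smul_one_eq_diagonal, diagonal_sub, posSemidef_diagonal_iff]
    exact fun i => sub_nonneg.2 (hd i).2

theorem diag_mem_Icc_of_mem_loewnerIcc (hX : X ∈ loewnerIcc α β) (i : ι) :
    X i i ∈ Set.Icc α β := by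
  have hlow := hX.2.1.diag_nonneg (i := i)
  have hupp := hX.2.2.diag_nonneg (i := i)
  simp only [sub_apply, smul_apply, one_apply_eq, smul_eq_mul, mul_one] at hlow hupp
  exact ⟨sub_nonneg.1 hlow, sub_nonneg.1 hupp⟩

theorem posDef_of_mem_loewnerIcc (hα : 0 < α) (hX : X ∈ loewnerIcc α β) : X.PosDef := by
  have hα1 : (α • 1 : Matrix ι ι ℝ).PosDef := PosDef.one.smul hα
  simpa using PosDef.posSemidef_add hX.2.1 hα1

variable [Fintype ι]

theorem transpose_mul_mul_mem_loewnerIcc {V : Matrix ι ι ℝ} (hV : Vᵀ * V = 1)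
    (hX : X ∈ loewnerIcc α β) : Vᵀ * X * V ∈ loewnerIcc α β := by
  obtain ⟨hherm, hlow, hupp⟩ := hX
  refine ⟨by simpa using isHermitian_conjTranspose_mul_mul V hherm, ?_, ?_⟩
  · simpa [Matrix.mul_sub, Matrix.sub_mul, hV] using hlow.conjTranspose_mul_mul_same V
  · simpa [Matrix.mul_sub, Matrix.sub_mul, hV] using hupp.conjTranspose_mul_mul_same V

theorem trace_transpose_mul_diagonal_mul_mul (V X : Matrix ι ι ℝ) (σ : ι → ℝ) :
    (Vᵀ * diagonal σ * V * X).trace = ∑ i, σ i * (V * X * Vᵀ) i i := by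
  rw [Matrix.mul_assoc, Matrix.mul_assoc, trace_mul_comm]
  simp [trace, Matrix.mul_assoc, diagonal_mul]

theorem det_mul_mul_transpose {V : Matrix ι ι ℝ} (hV : Vᵀ * V = 1) (X : Matrix ι ι ℝ) :
    (V * X * Vᵀ).det = X.det := by
  have h := congrArg det hV
  rw [det_mul, det_transpose, det_one] at h
  rw [det_mul, det_mul, det_transpose, mul_right_comm, h, one_mul]

theorem PosDef.log_det_le_trace_sub_card_s16 {M : Matrix ι ι ℝ} (hM : M.PosDef) :
    Real.log M.det ≤ M.trace - Fintype.card ι := by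
  have hμ := hM.eigenvalues_pos
  rw [hM.1.det_eq_prod_eigenvalues, hM.1.trace_eq_sum_eigenvalues]
  simp only [RCLike.ofReal_real_eq_id, id]
  rw [Real.log_prod fun i _ => (hμ i).ne']
  calc ∑ i, Real.log (hM.1.eigenvalues i) ≤ ∑ i, (hM.1.eigenvalues i - 1) :=
        Finset.sum_le_sum fun i _ => Real.log_le_sub_one_of_pos (hμ i)
    _ = _ := by simp [Finset.sum_sub_distrib]

theorem PosDef.det_le_prod_diag {Y : Matrix ι ι ℝ} (hY : Y.PosDef) :
    Y.det ≤ ∏ i, Y i i := by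
  -- Rescale `Y` to unit diagonal; then `log det ≤ trace - card` gives `det ≤ 1`.
  have hdiag : ∀ i, 0 < Y i i := fun i => hY.diag_pos
  set d : ι → ℝ := fun i => (√(Y i i))⁻¹
  have hd : ∀ i, d i * d i = (Y i i)⁻¹ := fun i => by
    rw [← mul_inv, Real.mul_self_sqrt (hdiag i).le]
  have hM : (diagonal d * Y * diagonal d).PosDef := by
    have hunit : IsUnit (diagonal d) :=
      isUnit_diagonal.mpr (Pi.isUnit_iff.mpr fun i => by simp [d, (Real.sqrt_pos.2 (hdiag i)).ne'])
    simpa using hY.conjTranspose_mul_mul_same (mulVec_injective_of_isUnit hunit)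
  have htrace : (diagonal d * Y * diagonal d).trace = Fintype.card ι := by
    simp [trace, diagonal_mul, mul_diagonal, mul_right_comm _ _ (d _), hd, (hdiag _).ne']
  have hdet : (diagonal d * Y * diagonal d).det = Y.det / ∏ i, Y i i := by
    simp only [det_mul, det_diagonal]
    rw [mul_right_comm, ← Finset.prod_mul_distrib, Finset.prod_congr rfl fun i _ => hd i,
      Finset.prod_inv_distrib, div_eq_mul_inv, mul_comm]
  have hle : (diagonal d * Y * diagonal d).det ≤ 1 := by
    rw [← Real.log_nonpos_iff hM.det_pos.le]
    linarith [hM.log_det_le_trace_sub_card_s16]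
  rwa [hdet, div_le_one (Finset.prod_pos fun i _ => hdiag i)] at hle

end Matrix

/-- Minimization of `Tr(SX) − log det X` over `{αI ⪯ X ⪯ βI}`: if
`S = Vᵀ diag(σ) V` with `V` orthogonal and `σ i > 0`, the minimizer is
`X* = Vᵀ diag(λ) V` with `λ i = min (max (1/σ i) α) β`. -/
theorem min_trace_minus_logdet_clipping (n : ℕ) (α β : ℝ) (hα : 0 < α) (hαβ : α ≤ β)
    (V : Matrix (Fin n) (Fin n) ℝ) (hV : Vᵀ * V = 1) (σ : Fin n → ℝ)
    (hσ : ∀ i, 0 < σ i)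
    (S : Matrix (Fin n) (Fin n) ℝ) (hS : S = Vᵀ * Matrix.diagonal σ * V) :
    let Q : Set (Matrix (Fin n) (Fin n) ℝ) :=
      {X | X.IsHermitian ∧ (X - α • 1).PosSemidef ∧ ((β • 1 : Matrix (Fin n) (Fin n) ℝ) - X).PosSemidef}
    let f : Matrix (Fin n) (Fin n) ℝ → ℝ := fun X => (S * X).trace - Real.log X.det
    let Xstar : Matrix (Fin n) (Fin n) ℝ :=
      Vᵀ * Matrix.diagonal (fun i => min (max (σ i)⁻¹ α) β) * V
    Xstar ∈ Q ∧ ∀ X ∈ Q, f Xstar ≤ f X := by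
  intro Q f Xstar
  set l : Fin n → ℝ := fun i => min (max (σ i)⁻¹ α) β
  have hl : ∀ i, l i ∈ Set.Icc α β := fun i =>
    ⟨le_min (le_max_right _ _) hαβ, min_le_right _ _⟩
  have hVVt : V * Vᵀ = 1 := mul_eq_one_comm.mp hV
  have f_eq : ∀ X, f X = ∑ i, σ i * (V * X * Vᵀ) i i - Real.log (V * X * Vᵀ).det := by
    intro X
    rw [det_mul_mul_transpose hV, ← trace_transpose_mul_diagonal_mul_mul, ← hS]
  have hXstar : V * Xstar * Vᵀ = diagonal l := by
    simp only [Xstar, ← Matrix.mul_assoc, hVVt, Matrix.one_mul]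
    rw [Matrix.mul_assoc, hVVt, Matrix.mul_one]
  refine ⟨transpose_mul_mul_mem_loewnerIcc hV (diagonal_mem_loewnerIcc hl), fun X hX => ?_⟩
  set Y := V * X * Vᵀ
  have hY : Y ∈ loewnerIcc α β :=
    transpose_mul_mul_mem_loewnerIcc (V := Vᵀ) (by rwa [transpose_transpose]) hX
  have hYpd := posDef_of_mem_loewnerIcc hα hY
  have hYdiag := diag_mem_Icc_of_mem_loewnerIcc hY
  have hadamard : Real.log Y.det ≤ ∑ i, Real.log (Y i i) := by
    rw [← Real.log_prod fun i _ => (hYpd.diag_pos).ne']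
    exact Real.log_le_log hYpd.det_pos hYpd.det_le_prod_diag
  calc f Xstar = ∑ i, (σ i * l i - Real.log (l i)) := by
        rw [f_eq, hXstar, det_diagonal, Real.log_prod fun i _ => (hα.trans_le (hl i).1).ne',
          Finset.sum_sub_distrib]
        simp
    _ ≤ ∑ i, (σ i * Y i i - Real.log (Y i i)) := Finset.sum_le_sum fun i _ =>
        mul_sub_log_min_max_inv_le (hσ i) hα hαβ (hYdiag i)
    _ ≤ ∑ i, σ i * Y i i - Real.log Y.det := by
        rw [Finset.sum_sub_distrib]
        linarith
    _ = f X := (f_eq X).symm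
end
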